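/- arXiv:2112.06474 — 3 statements merged into one kernel-verified Lean document; each statement's English description precedes it below -/
import Mathlib

section
/- Let R be a positive semidefinite 3×3 matrix and let x_p, x_q, x_r : ℝ → ℝ³. Define f(s,t) = ⟨(1-s)x_p(t) + s·x_q(t) - x_r(t), R((1-s)x_p(t) + s·x_q(t) - x_r(t))⟩, and define d_p(t) = ⟨x_p(t)-x_r(t), R(x_p(t)-x_r(t))⟩, d_q(t) = ⟨x_q(t)-x_r(t), R(x_q(t)-x_r(t))⟩, d_s(t) = ⟨x_q(t)-x_r(t), R(x_p(t)-x_r(t))⟩. Then for all t and all s ∈ [0,1], f(s,t) ≥ min{d_p(t), d_q(t), d_s(t)}. -/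
open Matrix

theorem feasibility_lower_bound
    (R : Matrix (Fin 3) (Fin 3) ℝ) (hR : R.PosSemidef)
    (xp xq xr : ℝ → Fin 3 → ℝ)
    (f : ℝ → ℝ → ℝ)
    (hf : ∀ s t, f s t =
      ((1 - s) • xp t + s • xq t - xr t) ⬝ᵥ
        R.mulVec ((1 - s) • xp t + s • xq t - xr t))
    (dp dq ds : ℝ → ℝ)
    (hdp : ∀ t, dp t = (xp t - xr t) ⬝ᵥ R.mulVec (xp t - xr t))
    (hdq : ∀ t, dq t = (xq t - xr t) ⬝ᵥ R.mulVec (xq t - xr t))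
    (hds : ∀ t, ds t = (xq t - xr t) ⬝ᵥ R.mulVec (xp t - xr t)) :
    ∀ t : ℝ, ∀ s ∈ Set.Icc (0 : ℝ) 1,
      f s t ≥ min (dp t) (min (dq t) (ds t)) := by
  intro t s hs
  obtain ⟨h0, h1⟩ := hs
  obtain ⟨u, hu⟩ : ∃ u, xp t - xr t = u := ⟨_, rfl⟩
  obtain ⟨v, hv⟩ : ∃ v, xq t - xr t = v := ⟨_, rfl⟩
  have hRt : Rᵀ = R := by
    ext i j
    have := congrFun (congrFun hR.1.eq i) j
    simpa using this
  have hsym : u ⬝ᵥ R.mulVec v = v ⬝ᵥ R.mulVec u := by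
    rw [dotProduct_mulVec]
    nth_rewrite 1 [← hRt]
    rw [vecMul_transpose, dotProduct_comm]
  have hA : 0 ≤ u ⬝ᵥ R.mulVec u := by simpa using hR.dotProduct_mulVec_nonneg u
  have hB : 0 ≤ v ⬝ᵥ R.mulVec v := by simpa using hR.dotProduct_mulVec_nonneg v
  have hw : (1 - s) • xp t + s • xq t - xr t = (1 - s) • u + s • v := by
    rw [← hu, ← hv]; module
  have hexp : f s t = (1 - s)^2 * (u ⬝ᵥ R.mulVec u)
      + 2 * s * (1 - s) * (v ⬝ᵥ R.mulVec u) + s^2 * (v ⬝ᵥ R.mulVec v) := by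
    rw [hf, hw, mulVec_add, mulVec_smul, mulVec_smul, add_dotProduct,
      smul_dotProduct, smul_dotProduct, dotProduct_add, dotProduct_add,
      dotProduct_smul, dotProduct_smul, dotProduct_smul, dotProduct_smul,
      hsym]
    simp only [smul_eq_mul]
    ring
  rw [hexp, hdp, hdq, hds, hu, hv]
  have hm4 := min_le_right (u ⬝ᵥ R.mulVec u) (min (v ⬝ᵥ R.mulVec v) (v ⬝ᵥ R.mulVec u))
  have hm1 := min_le_left (u ⬝ᵥ R.mulVec u) (min (v ⬝ᵥ R.mulVec v) (v ⬝ᵥ R.mulVec u))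
  have hm2 := (min_le_right (v ⬝ᵥ R.mulVec v) (v ⬝ᵥ R.mulVec u)).trans' hm4
  have hm3 := (min_le_left (v ⬝ᵥ R.mulVec v) (v ⬝ᵥ R.mulVec u)).trans' hm4
  nlinarith [sq_nonneg s, sq_nonneg (1 - s), mul_nonneg h0 (sub_nonneg.2 h1)]
end

section
/- Combining the previous results: if R is positive semidefinite, x_p, x_q, x_r : ℝ → ℝ³ are continuous, and the three functions d_p(t) = ‖x_p(t)-x_r(t)‖²_R, d_q(t) = ‖x_q(t)-x_r(t)‖²_R, d_s(t) = ⟨x_q(t)-x_r(t), R(x_p(t)-x_r(t))⟩ satisfy d_p(0), d_q(0), d_s(0) > 1 and never equal 1 on (0,T], then for every t ∈ [0,T] and every point z on the segment from x_p(t) to x_q(t), ‖z - x_r(t)‖²_R > 1. -/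
open Matrix

private lemma cont_quad (R : Matrix (Fin 3) (Fin 3) ℝ) (u v : ℝ → Fin 3 → ℝ)
    (hu : Continuous u) (hv : Continuous v) :
    Continuous fun t => u t ⬝ᵥ R.mulVec (v t) := by
  simp only [dotProduct, mulVec]
  refine continuous_finset_sum _ fun i _ => ?_
  exact ((continuous_apply i).comp hu).mul
    (continuous_finset_sum _ fun j _ => continuous_const.mul ((continuous_apply j).comp hv))

private lemma stay_above (T : ℝ) (f : ℝ → ℝ) (hf : Continuous f)
    (h0 : 1 < f 0) (hne : ∀ t ∈ Set.Ioc 0 T, f t ≠ 1) :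
    ∀ t ∈ Set.Icc (0 : ℝ) T, 1 < f t := by
  intro t ht
  by_contra h
  push_neg at h
  have h1 : (1 : ℝ) ∈ Set.Icc (f t) (f 0) := ⟨h, le_of_lt h0⟩
  obtain ⟨t', ht', hft'⟩ := intermediate_value_Icc' ht.1 hf.continuousOn h1
  have ht'0 : t' ≠ 0 := by rintro rfl; exact ne_of_gt h0 hft'
  exact hne t' ⟨lt_of_le_of_ne ht'.1 (Ne.symm ht'0), ht'.2.trans ht.2⟩ hft'

theorem safety_and_visibility_guarantee
    (R : Matrix (Fin 3) (Fin 3) ℝ) (hR : R.PosSemidef)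
    (T : ℝ) (hT : 0 < T)
    (xp xq xr : ℝ → Fin 3 → ℝ)
    (hcp : Continuous xp) (hcq : Continuous xq) (hcr : Continuous xr)
    (dp dq ds : ℝ → ℝ)
    (hdp : ∀ t, dp t = (xp t - xr t) ⬝ᵥ R.mulVec (xp t - xr t))
    (hdq : ∀ t, dq t = (xq t - xr t) ⬝ᵥ R.mulVec (xq t - xr t))
    (hds : ∀ t, ds t = (xq t - xr t) ⬝ᵥ R.mulVec (xp t - xr t))
    (h0p : 1 < dp 0) (h0q : 1 < dq 0) (h0s : 1 < ds 0)
    (hp : ∀ t ∈ Set.Ioc 0 T, dp t ≠ 1)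
    (hq : ∀ t ∈ Set.Ioc 0 T, dq t ≠ 1)
    (hs : ∀ t ∈ Set.Ioc 0 T, ds t ≠ 1) :
    ∀ t ∈ Set.Icc (0 : ℝ) T, ∀ s ∈ Set.Icc (0 : ℝ) 1,
      1 < (((1 - s) • xp t + s • xq t) - xr t) ⬝ᵥ
            R.mulVec (((1 - s) • xp t + s • xq t) - xr t) := by
  have hdp' : Continuous dp := by
    have := cont_quad R (fun t => xp t - xr t) (fun t => xp t - xr t)
      (hcp.sub hcr) (hcp.sub hcr)
    simpa [← hdp] using this
  have hdq' : Continuous dq := by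
    have := cont_quad R (fun t => xq t - xr t) (fun t => xq t - xr t)
      (hcq.sub hcr) (hcq.sub hcr)
    simpa [← hdq] using this
  have hds' : Continuous ds := by
    have := cont_quad R (fun t => xq t - xr t) (fun t => xp t - xr t)
      (hcq.sub hcr) (hcp.sub hcr)
    simpa [← hds] using this
  have Hp := stay_above T dp hdp' h0p hp
  have Hq := stay_above T dq hdq' h0q hq
  have Hs := stay_above T ds hds' h0s hs
  intro t ht s hsi
  obtain ⟨hs0, hs1⟩ := hsi
  set u := xp t - xr t
  set v := xq t - xr t
  have hvec : ((1 - s) • xp t + s • xq t) - xr t = (1 - s) • u + s • v := by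
    simp [u, v, smul_sub]
    module
  rw [hvec]
  have hsymm : u ⬝ᵥ R.mulVec v = v ⬝ᵥ R.mulVec u := by
    have hRt : Rᵀ = R := by
      have h := hR.isHermitian
      rwa [Matrix.IsHermitian, Matrix.conjTranspose_eq_transpose_of_trivial] at h
    rw [dotProduct_mulVec, ← mulVec_transpose, hRt, dotProduct_comm]
  have expand : ((1 - s) • u + s • v) ⬝ᵥ R.mulVec ((1 - s) • u + s • v)
      = (1 - s) ^ 2 * dp t + 2 * (s * (1 - s)) * ds t + s ^ 2 * dq t := by
    rw [hdp, hdq, hds]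
    simp only [mulVec_add, mulVec_smul, dotProduct_add, add_dotProduct,
      dotProduct_smul, smul_dotProduct, smul_eq_mul, u, v]
    rw [hsymm]
    ring
  rw [expand]
  set m := min (dp t) (min (ds t) (dq t)) with hmdef
  have hm : 1 < m := lt_min (Hp t ht) (lt_min (Hs t ht) (Hq t ht))
  have hc2 : 0 ≤ 2 * (s * (1 - s)) := by
    have := mul_nonneg hs0 (sub_nonneg.mpr hs1); linarith
  have e1 : (1 - s) ^ 2 * m ≤ (1 - s) ^ 2 * dp t :=
    mul_le_mul_of_nonneg_left (min_le_left _ _) (sq_nonneg _)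
  have e2 : 2 * (s * (1 - s)) * m ≤ 2 * (s * (1 - s)) * ds t :=
    mul_le_mul_of_nonneg_left ((min_le_right _ _).trans (min_le_left _ _)) hc2
  have e3 : s ^ 2 * m ≤ s ^ 2 * dq t :=
    mul_le_mul_of_nonneg_left ((min_le_right _ _).trans (min_le_right _ _)) (sq_nonneg _)
  have hid : (1 - s) ^ 2 * m + 2 * (s * (1 - s)) * m + s ^ 2 * m = m := by ring
  linarith
end

section
/- Let u, v, r ∈ ℝ³ and let R be symmetric positive semidefinite with ⟨u-r, R(u-r)⟩ > 1, ⟨v-r, R(v-r)⟩ > 1, and ⟨v-r, R(u-r)⟩ > 1. Then the line segment from u to v does not intersect the ellipsoid {x : ⟨x-r, R(x-r)⟩ ≤ 1}. -/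
open Matrix

theorem segment_misses_ellipsoid
    (R : Matrix (Fin 3) (Fin 3) ℝ) (hR : R.PosSemidef)
    (u v r : Fin 3 → ℝ)
    (hu : 1 < (u - r) ⬝ᵥ R.mulVec (u - r))
    (hv : 1 < (v - r) ⬝ᵥ R.mulVec (v - r))
    (huv : 1 < (v - r) ⬝ᵥ R.mulVec (u - r)) :
    ∀ s ∈ Set.Icc (0 : ℝ) 1,
      ((1 - s) • u + s • v) ∉
        {x : Fin 3 → ℝ | (x - r) ⬝ᵥ R.mulVec (x - r) ≤ 1} := by
  intro s hs
  obtain ⟨hs0, hs1⟩ := hs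
  simp only [Set.mem_setOf_eq, not_le]
  have hx : (1 - s) • u + s • v - r = (1 - s) • (u - r) + s • (v - r) := by
    ext i; simp [Pi.sub_apply]; ring
  rw [hx]
  have hRT : Rᵀ = R := by
    have := hR.1
    rwa [Matrix.IsHermitian, conjTranspose_eq_transpose_of_trivial] at this
  have hsym : (u - r) ⬝ᵥ R.mulVec (v - r) = (v - r) ⬝ᵥ R.mulVec (u - r) := by
    rw [dotProduct_mulVec, ← mulVec_transpose, hRT, dotProduct_comm]
  set p := u - r
  set q := v - r
  set a := p ⬝ᵥ R.mulVec p with ha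
  set b := q ⬝ᵥ R.mulVec q with hb
  set c := q ⬝ᵥ R.mulVec p with hc
  rw [mulVec_add, mulVec_smul, mulVec_smul, add_dotProduct, smul_dotProduct,
    smul_dotProduct, dotProduct_add, dotProduct_add, dotProduct_smul,
    dotProduct_smul, dotProduct_smul, dotProduct_smul, hsym]
  simp only [smul_eq_mul, ← ha, ← hb, ← hc]
  have expand : (1 - s) * ((1 - s) * a + s * c) + s * ((1 - s) * c + s * b) - 1
      = (1 - s) ^ 2 * (a - 1) + (2 * (s * (1 - s))) * (c - 1) + s ^ 2 * (b - 1) := by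
    ring
  have h2 : 0 ≤ (2 * (s * (1 - s))) * (c - 1) := by
    apply mul_nonneg (by nlinarith) (by linarith)
  rcases le_or_gt s (1/2) with h | h
  · have h1 : (1/4 : ℝ) ≤ (1 - s) ^ 2 := by nlinarith
    have h1' : (1/4 : ℝ) * (a - 1) ≤ (1 - s) ^ 2 * (a - 1) :=
      mul_le_mul_of_nonneg_right h1 (by linarith)
    have h3 : 0 ≤ s ^ 2 * (b - 1) := mul_nonneg (sq_nonneg s) (by linarith)
    linarith [expand]
  · have h1 : (1/4 : ℝ) ≤ s ^ 2 := by nlinarith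
    have h1' : (1/4 : ℝ) * (b - 1) ≤ s ^ 2 * (b - 1) :=
      mul_le_mul_of_nonneg_right h1 (by linarith)
    have h3 : 0 ≤ (1 - s) ^ 2 * (a - 1) := mul_nonneg (sq_nonneg _) (by linarith)
    linarith [expand]
end
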